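/- Let α, β > 0, set ω = √2 (αβ)^{1/4}, T = 2π/ω, and let γ(t) = (β^{1/4} cos ωt, −α^{1/4} sin ωt), a clockwise parametrization of the ellipse with semiaxes β^{1/4} and α^{1/4}. Then the free-period action with κ = 0 satisfies ∫₀ᵀ L(γ(t), γ'(t)) dt = √2 π (αβ)^{1/4} (√α + √β − √2). In particular this action is negative if and only if √α + √β < √2. -/

import Mathlib

/-!
Along an ellipse `q(t) = (a cos ωt, -b sin ωt)` traversed clockwise, the magnetic term
`-y v₁ + x v₂` of the Lagrangian is the constant `-abω`, and everything else is a combination of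
`sin² ωt` and `cos² ωt`, each of which integrates to `π / ω` over the period `2π / ω`. For
`a = β^{1/4}`, `b = α^{1/4}` and `ω = √2 ab` the quadratic terms total `2a²b²(a² + b²)`, so the
action is `√2 π ab (a² + b² - √2)`, with `a² = √β` and `b² = √α`.
-/

open Real

/-- Lagrangian of the planar electromagnetic toy model:
`L((x,y),(v₁,v₂)) = ½(v₁²+v₂²) − y v₁ + x v₂ + αx² + βy²`. -/
noncomputable def toyLag (α β : ℝ) (q v : ℝ × ℝ) : ℝ :=
  (1/2)*(v.1^2 + v.2^2) - q.2*v.1 + q.1*v.2 + α*q.1^2 + β*q.2^2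

open intervalIntegral

section Period

variable {ω : ℝ}

theorem integral_sin_mul_sq_period (hω : ω ≠ 0) :
    ∫ t in (0:ℝ)..2 * π / ω, sin (ω * t) ^ 2 = π / ω := by
  rw [integral_comp_mul_left (fun x => sin x ^ 2) hω, mul_zero, mul_div_cancel₀ _ hω,
    integral_sin_sq, sin_two_pi, sin_zero, smul_eq_mul]
  field_simp
  ring

theorem integral_cos_mul_sq_period (hω : ω ≠ 0) :
    ∫ t in (0:ℝ)..2 * π / ω, cos (ω * t) ^ 2 = π / ω := by
  rw [integral_comp_mul_left (fun x => cos x ^ 2) hω, mul_zero, mul_div_cancel₀ _ hω,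
    integral_cos_sq, sin_two_pi, sin_zero, smul_eq_mul]
  field_simp
  ring

end Period

theorem hasDerivAt_ellipse (a b ω t : ℝ) :
    HasDerivAt (fun t => (a * cos (ω * t), -b * sin (ω * t)))
      (-(a * ω) * sin (ω * t), -(b * ω) * cos (ω * t)) t := by
  have hlin : HasDerivAt (fun t => ω * t) ω t := by simpa using (hasDerivAt_id t).const_mul ω
  convert (((hasDerivAt_cos _).comp t hlin).const_mul a).prodMk
    (((hasDerivAt_sin _).comp t hlin).const_mul (-b)) using 1 <;> ext <;> simp <;> ring

theorem toyLag_ellipse (α β a b ω θ : ℝ) :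
    toyLag α β (a * cos θ, -b * sin θ) (-(a * ω) * sin θ, -(b * ω) * cos θ) =
      (ω ^ 2 * a ^ 2 / 2 + β * b ^ 2) * sin θ ^ 2 + (ω ^ 2 * b ^ 2 / 2 + α * a ^ 2) * cos θ ^ 2
        - a * b * ω := by
  have hθ := sin_sq_add_cos_sq θ
  simp only [toyLag]
  linear_combination (-(a * b * ω)) * hθ

theorem integral_toyLag_ellipse (α β a b : ℝ) {ω : ℝ} (hω : ω ≠ 0) :
    ∫ t in (0:ℝ)..2 * π / ω,
        toyLag α β (a * cos (ω * t), -b * sin (ω * t))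
          (-(a * ω) * sin (ω * t), -(b * ω) * cos (ω * t)) =
      π / ω * (ω ^ 2 * (a ^ 2 + b ^ 2) / 2 + α * a ^ 2 + β * b ^ 2) - 2 * π * a * b := by
  simp only [toyLag_ellipse]
  have hs : IntervalIntegrable (fun t => sin (ω * t) ^ 2) MeasureTheory.volume 0 (2 * π / ω) :=
    (by fun_prop : Continuous fun t => sin (ω * t) ^ 2).intervalIntegrable _ _
  have hc : IntervalIntegrable (fun t => cos (ω * t) ^ 2) MeasureTheory.volume 0 (2 * π / ω) :=
    (by fun_prop : Continuous fun t => cos (ω * t) ^ 2).intervalIntegrable _ _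
  rw [integral_sub ((hs.const_mul _).add (hc.const_mul _)) intervalIntegrable_const,
    integral_add (hs.const_mul _) (hc.const_mul _), integral_const_mul, integral_const_mul,
    integral_sin_mul_sq_period hω, integral_cos_mul_sq_period hω, integral_const, smul_eq_mul]
  field_simp
  ring

theorem rpow_one_div_four_sq {x : ℝ} (hx : 0 ≤ x) : (x ^ ((1:ℝ)/4)) ^ 2 = √x := by
  rw [← rpow_natCast, ← rpow_mul hx, sqrt_eq_rpow]
  norm_num

theorem stmt_6 (α β : ℝ) (hα : 0 < α) (hβ : 0 < β)
    (ω T : ℝ) (hω : ω = Real.sqrt 2 * (α*β) ^ ((1:ℝ)/4)) (hT : T = 2*π/ω)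
    (γ : ℝ → ℝ × ℝ)
    (hγ : γ = fun t => (β ^ ((1:ℝ)/4) * Real.cos (ω*t), -(α ^ ((1:ℝ)/4)) * Real.sin (ω*t))) :
    (∫ t in (0:ℝ)..T, toyLag α β (γ t) (deriv γ t)) =
      Real.sqrt 2 * π * (α*β) ^ ((1:ℝ)/4) *
        (Real.sqrt α + Real.sqrt β - Real.sqrt 2) ∧
    ((∫ t in (0:ℝ)..T, toyLag α β (γ t) (deriv γ t)) < 0 ↔
      Real.sqrt α + Real.sqrt β < Real.sqrt 2) := by
  set a := β ^ ((1:ℝ)/4)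
  set b := α ^ ((1:ℝ)/4)
  have hab : (α * β) ^ ((1:ℝ)/4) = a * b := by rw [mul_rpow hα.le hβ.le, mul_comm]
  have ha : a ^ 2 = √β := rpow_one_div_four_sq hβ.le
  have hb : b ^ 2 = √α := rpow_one_div_four_sq hα.le
  have hωab : ω = √2 * a * b := by rw [hω, hab, mul_assoc]
  have hpos : 0 < √2 * π * (a * b) := by positivity
  have hω0 : ω ≠ 0 := by rw [hωab]; positivity
  have hderiv : deriv γ = fun t => (-(a * ω) * sin (ω * t), -(b * ω) * cos (ω * t)) := by
    subst hγ; exact funext fun t => (hasDerivAt_ellipse a b ω t).deriv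
  have haction : (∫ t in (0:ℝ)..T, toyLag α β (γ t) (deriv γ t)) =
      √2 * π * (α * β) ^ ((1:ℝ)/4) * (√α + √β - √2) := by
    rw [hderiv, hγ, hT, integral_toyLag_ellipse α β a b hω0, hab, ← ha, ← hb, hωab]
    have h2 : √2 ^ 2 = 2 := sq_sqrt zero_le_two
    have hα4 : α = b ^ 4 := by rw [← sq_sqrt hα.le, ← hb]; ring
    have hβ4 : β = a ^ 4 := by rw [← sq_sqrt hβ.le, ← ha]; ring
    rw [hα4, hβ4]
    field_simp
    rw [h2]
    ring
  refine ⟨haction, ?_⟩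
  rw [haction, hab, ← smul_eq_mul, smul_neg_iff_of_pos_left hpos, sub_neg]
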